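/- As d → ∞, ∏_{i=2}^d L(2i) ∼ C_e·√d, i.e., lim_{d→∞} (∏_{i=2}^d L(2i))/√d = C_e, where C_e = 4/(πC) and C = 2^{1/6}·e^{1/2}·π/A⁶. -/

import Mathlib

open Filter Finset Real

namespace Dimer

/-- The kernel `L(d) = Γ((d-1)/2)² Γ((d+1)/2)² / Γ(d/2)⁴`. -/
noncomputable def Lker (d : ℝ) : ℝ :=
  Real.Gamma ((d - 1) / 2) ^ 2 * Real.Gamma ((d + 1) / 2) ^ 2 / Real.Gamma (d / 2) ^ 4

/-- The kernel `U(d) = Γ((d-1)/2)² Γ((d+1)/2)² / (Γ(d/2-1) Γ(d/2)² Γ(d/2+1))`. -/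
noncomputable def Uker (d : ℝ) : ℝ :=
  Real.Gamma ((d - 1) / 2) ^ 2 * Real.Gamma ((d + 1) / 2) ^ 2 /
    (Real.Gamma (d / 2 - 1) * Real.Gamma (d / 2) ^ 2 * Real.Gamma (d / 2 + 1))

/-- The Pochhammer symbol `(a)_n = a(a+1)⋯(a+n-1)`. -/
noncomputable def poch (a : ℝ) (n : ℕ) : ℝ := ∏ j ∈ Finset.range n, (a + (j : ℝ))

/-- `A` is the Glaisher–Kinkelin constant:
`lim_{n→∞} (0!·1!⋯(n-1)!) · n^{-n²/2+1/12} · (2π)^{-n/2} · e^{3n²/4} = e^{1/12}/A`. -/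
def IsGlaisher (A : ℝ) : Prop :=
  Filter.Tendsto (fun n : ℕ =>
      (∏ i ∈ Finset.range n, (Nat.factorial i : ℝ)) *
        (n : ℝ) ^ (-(n : ℝ) ^ 2 / 2 + 1 / 12) * (2 * Real.pi) ^ (-(n : ℝ) / 2) *
        Real.exp (3 * (n : ℝ) ^ 2 / 4))
    Filter.atTop (nhds (Real.exp (1 / 12) / A))

end Dimer

/-!
By the duplication formula, `L(2i) = π² 2^{6-8i} ((2i-2)! (2i-1)!)² / ((i-1)!)⁸`, so the product
telescopes to `P(2d)² / P(d)⁸` with `P(n) = 0! 1! ⋯ (n-1)!`, up to elementary factors. In terms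
of the sequence `a(n)` defining the Glaisher–Kinkelin constant this reads
`∏_{i=2}^d L(2i) / √d = 4 / (π² 2^{1/6}) · a(2d)² / a(d)⁸`, which tends to the claimed constant
because `a(n) → e^{1/12} / A`, provided `A ≠ 0`. That `A ≠ 0` is the analytic content: Stirling's
formula with Robbins' step bound shows that `log a(n) - 5/n` increases, so `a` stays away from `0`.
-/

open scoped Nat Topology

namespace Stirling

theorem le_log_stirlingSeq_sdiff (n : ℕ) :
    1 / (3 * (2 * ((n : ℝ) + 1) + 1) ^ 2) ≤
      log (stirlingSeq (n + 1)) - log (stirlingSeq (n + 2)) := by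
  refine le_trans (le_of_eq ?_)
    (le_hasSum (log_stirlingSeq_sdiff_hasSum n) 0 fun _ _ => by positivity)
  push_cast
  field_simp
  ring

theorem le_log_stirlingSeq_sub_log_sqrt_pi {n : ℕ} (hn : n ≠ 0) :
    1 / (12 * n) - 2 / (n : ℝ) ^ 2 ≤ log (stirlingSeq n) - log √π := by
  obtain ⟨m, rfl⟩ := Nat.exists_eq_add_one_of_ne_zero hn
  set v : ℕ → ℝ := fun k => 1 / (12 * ((k : ℝ) + 1)) - 2 / ((k : ℝ) + 1) ^ 2
  have hv : Tendsto v atTop (𝓝 0) := by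
    have h : Tendsto (fun k : ℕ => 1 / ((k : ℝ) + 1)) atTop (𝓝 0) :=
      tendsto_one_div_add_atTop_nhds_zero_nat
    convert (h.const_mul (1 / 12)).sub ((h.pow 2).const_mul 2) using 1
    · ext k
      simp only [v]
      field_simp
    · norm_num
  have hanti : Antitone fun k => log (stirlingSeq (k + 1)) - v k := by
    refine antitone_nat_of_succ_le fun k => ?_
    have hvk : v k - v (k + 1) ≤ 1 / (3 * (2 * ((k : ℝ) + 1) + 1) ^ 2) := by
      simp only [v]
      push_cast
      rw [← sub_nonneg]
      field_simp
      ring_nf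
      positivity
    linarith [le_log_stirlingSeq_sdiff k]
  have hlim : Tendsto (fun k => log (stirlingSeq (k + 1)) - v k) atTop (𝓝 (log √π)) := by
    have h := ((continuousAt_log (by positivity)).tendsto.comp
      (tendsto_stirlingSeq_sqrt_pi.comp (tendsto_add_atTop_nat 1))).sub hv
    simpa using h
  have := hanti.le_of_tendsto hlim m
  push_cast
  simp only [v] at this
  linarith

end Stirling

namespace Dimer

open Stirling

theorem Lker_two_mul (x : ℝ) :
    Lker (2 * x) =
      π ^ 2 * 2 ^ (6 - 8 * x) * (Gamma (2 * x - 1) * Gamma (2 * x)) ^ 2 / Gamma x ^ 8 := by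
  have h₁ := Gamma_mul_Gamma_add_half (x - 1 / 2)
  have h₂ := Gamma_mul_Gamma_add_half x
  rw [sub_add_cancel, show 2 * (x - 1 / 2) = 2 * x - 1 by ring,
    show 1 - (2 * x - 1) = 2 - 2 * x by ring] at h₁
  have h₃ : (2 : ℝ) ^ (6 - 8 * x) = (2 ^ (2 - 2 * x) * 2 ^ (1 - 2 * x)) ^ 2 := by
    rw [← rpow_add two_pos, ← rpow_natCast, ← rpow_mul zero_le_two]
    ring_nf
  rw [Lker, show (2 * x - 1) / 2 = x - 1 / 2 by ring, show (2 * x + 1) / 2 = x + 1 / 2 by ring,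
    mul_div_cancel_left₀ x two_ne_zero]
  by_cases hx : Gamma x = 0
  · simp [hx]
  calc Gamma (x - 1 / 2) ^ 2 * Gamma (x + 1 / 2) ^ 2 / Gamma x ^ 4
      = (Gamma (x - 1 / 2) * Gamma x) ^ 2 * (Gamma x * Gamma (x + 1 / 2)) ^ 2 / Gamma x ^ 8 := by
        field_simp
    _ = _ := by
        rw [h₁, h₂, h₃]
        simp only [mul_pow, sq_sqrt pi_pos.le]
        ring

theorem Lker_two_mul_natCast_add_one (m : ℕ) :
    Lker (2 * ((m : ℝ) + 1)) =
      π ^ 2 * ((2 * m)! * (2 * m + 1)!) ^ 2 / (4 * 256 ^ m * m ! ^ 8) := by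
  have h : (2 : ℝ) ^ (6 - 8 * ((m : ℝ) + 1)) = (4 * 256 ^ m)⁻¹ := by
    rw [show 6 - 8 * ((m : ℝ) + 1) = -(8 * m + 2 : ℕ) by push_cast; ring, rpow_neg zero_le_two,
      rpow_natCast, pow_add, pow_mul, mul_comm]
    norm_num
  rw [Lker_two_mul, h, show 2 * ((m : ℝ) + 1) - 1 = (2 * m : ℕ) + 1 by push_cast; ring,
    show 2 * ((m : ℝ) + 1) = (2 * m + 1 : ℕ) + 1 by push_cast; ring, Gamma_nat_eq_factorial,
    Gamma_nat_eq_factorial, Gamma_nat_eq_factorial]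
  field_simp

def factorialProd (n : ℕ) : ℝ := ∏ i ∈ range n, (i ! : ℝ)

theorem factorialProd_pos (n : ℕ) : 0 < factorialProd n :=
  prod_pos fun i _ => by positivity

theorem factorialProd_succ (n : ℕ) : factorialProd (n + 1) = factorialProd n * n ! :=
  prod_range_succ _ _

theorem prod_Lker_two_mul {d : ℕ} (hd : d ≠ 0) :
    ∏ i ∈ Icc 2 d, Lker (2 * (i : ℝ)) =
      4 / π ^ 2 * (4 * π ^ 2) ^ d / 16 ^ d ^ 2 *
        (factorialProd (2 * d) ^ 2 / factorialProd d ^ 8) := by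
  induction d, Nat.one_le_iff_ne_zero.mpr hd using Nat.le_induction with
  | base =>
    norm_num [factorialProd, prod_range_succ]
    field_simp
    norm_num
  | succ d hd ih =>
    rw [prod_Icc_succ_top (by omega), ih (by omega), Nat.cast_succ, Lker_two_mul_natCast_add_one,
      show 2 * (d + 1) = 2 * d + 1 + 1 by ring, factorialProd_succ, factorialProd_succ,
      factorialProd_succ, show (256 : ℝ) ^ d = 16 ^ (2 * d) by rw [pow_mul]; norm_num]
    have := factorialProd_pos d
    have := factorialProd_pos (2 * d)
    field_simp
    ring

noncomputable def glaisherWeight (n : ℕ) : ℝ :=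
  (n : ℝ) ^ (-(n : ℝ) ^ 2 / 2 + 1 / 12) * (2 * π) ^ (-(n : ℝ) / 2) *
    exp (3 * (n : ℝ) ^ 2 / 4)

noncomputable def glaisherSeq (n : ℕ) : ℝ := factorialProd n * glaisherWeight n

theorem isGlaisher_iff {A : ℝ} :
    IsGlaisher A ↔ Tendsto glaisherSeq atTop (𝓝 (exp (1 / 12) / A)) := by
  unfold IsGlaisher glaisherSeq factorialProd glaisherWeight
  simp only [mul_assoc]

theorem glaisherWeight_pos {n : ℕ} (hn : n ≠ 0) : 0 < glaisherWeight n := by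
  have : (0 : ℝ) < n := by positivity
  unfold glaisherWeight
  positivity

theorem glaisherSeq_pos {n : ℕ} (hn : n ≠ 0) : 0 < glaisherSeq n :=
  mul_pos (factorialProd_pos n) (glaisherWeight_pos hn)

theorem log_glaisherWeight {n : ℕ} (hn : n ≠ 0) :
    log (glaisherWeight n) =
      (-(n : ℝ) ^ 2 / 2 + 1 / 12) * log n - n / 2 * log (2 * π) + 3 * (n : ℝ) ^ 2 / 4 := by
  have : (0 : ℝ) < n := by positivity
  rw [glaisherWeight, log_mul (by positivity) (exp_pos _).ne',
    log_mul (by positivity) (by positivity), log_rpow this, log_rpow (by positivity), log_exp]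
  ring

theorem glaisherWeight_two_mul_sq_div {d : ℕ} (hd : d ≠ 0) :
    glaisherWeight (2 * d) ^ 2 / glaisherWeight d ^ 8 =
      2 ^ (1 / 6 : ℝ) * (4 * π ^ 2) ^ d / (16 ^ d ^ 2 * √d) := by
  have : (0 : ℝ) < d := by positivity
  have := glaisherWeight_pos hd
  have := glaisherWeight_pos (mul_ne_zero two_ne_zero hd)
  have h4 : log 4 = 2 * log 2 := by rw [show (4 : ℝ) = 2 ^ 2 by norm_num, log_pow]; norm_num
  have h16 : log 16 = 4 * log 2 := by rw [show (16 : ℝ) = 2 ^ 4 by norm_num, log_pow]; norm_num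
  refine log_injOn_pos (Set.mem_Ioi.mpr (by positivity))
    (Set.mem_Ioi.mpr (by positivity)) ?_
  simp (disch := positivity) only [log_div, log_mul, log_pow, log_rpow, log_sqrt,
    log_glaisherWeight hd, log_glaisherWeight (mul_ne_zero two_ne_zero hd)]
  push_cast
  simp (disch := positivity) only [log_mul]
  rw [h4, h16]
  ring

theorem prod_Lker_two_mul_div_sqrt {d : ℕ} (hd : d ≠ 0) :
    (∏ i ∈ Icc 2 d, Lker (2 * (i : ℝ))) / √d =
      4 / (π ^ 2 * 2 ^ (1 / 6 : ℝ)) * (glaisherSeq (2 * d) ^ 2 / glaisherSeq d ^ 8) := by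
  have hW := glaisherWeight_two_mul_sq_div hd
  have := glaisherWeight_pos hd
  have := glaisherWeight_pos (mul_ne_zero two_ne_zero hd)
  have := factorialProd_pos d
  have := factorialProd_pos (2 * d)
  have : (0 : ℝ) < √d := by positivity
  rw [prod_Lker_two_mul hd, glaisherSeq, glaisherSeq]
  field_simp at hW ⊢
  linear_combination -hW

theorem log_glaisherSeq_succ_sub {n : ℕ} (hn : n ≠ 0) :
    log (glaisherSeq (n + 1)) - log (glaisherSeq n) =
      (log (stirlingSeq n) - log √π)
        - (n / 2 + 3 / 4) * (log (stirlingSeq n) - log (stirlingSeq (n + 1)))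
        - log (1 + 1 / n) / 24 := by
  have hn' : (0 : ℝ) < n := by positivity
  have := factorialProd_pos n
  rw [glaisherSeq, glaisherSeq, factorialProd_succ,
    log_mul (by positivity) (glaisherWeight_pos n.succ_ne_zero).ne',
    log_mul (by positivity) (glaisherWeight_pos hn).ne', log_mul (by positivity) (by positivity),
    log_glaisherWeight hn, log_glaisherWeight n.succ_ne_zero, log_stirlingSeq_formula,
    log_stirlingSeq_formula, Nat.factorial_succ, one_add_div hn'.ne']
  push_cast
  simp (disch := positivity) only [log_mul, log_div, log_exp, log_sqrt]
  ring

theorem log_glaisherSeq_sub_le_succ {n : ℕ} (hn : n ≠ 0) :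
    log (glaisherSeq n) - 5 / n ≤ log (glaisherSeq (n + 1)) - 5 / (n + 1) := by
  have hn' : (1 : ℝ) ≤ n := Nat.one_le_cast.mpr (Nat.one_le_iff_ne_zero.mpr hn)
  have hσ := le_log_stirlingSeq_sub_log_sqrt_pi hn
  have hρ := mul_le_mul_of_nonneg_left (log_stirlingSeq_sdiff_le n)
    (by positivity : (0 : ℝ) ≤ n / 2 + 3 / 4)
  have hL : log (1 + 1 / n) ≤ 1 / n := by
    linarith [log_le_sub_one_of_pos (by positivity : (0 : ℝ) < 1 + 1 / n)]
  -- the `1 / n` terms of the three bounds cancel, leaving `-1 / (48 n (n + 1)) - 2 / n²`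
  have hpoly : 5 / (n + 1) - 5 / n ≤
      1 / (12 * n) - 2 / (n : ℝ) ^ 2 - (n / 2 + 3 / 4) * (1 / (12 * n * (n + 1)))
        - 1 / n / 24 := by
    rw [← sub_nonneg]
    field_simp
    ring_nf
    nlinarith
  have := log_glaisherSeq_succ_sub hn
  linarith

theorem glaisherSeq_one_mul_exp_le {n : ℕ} (hn : n ≠ 0) :
    glaisherSeq 1 * exp (-5) ≤ glaisherSeq n := by
  obtain ⟨m, rfl⟩ := Nat.exists_eq_add_one_of_ne_zero hn
  have hmono : Monotone fun k : ℕ => log (glaisherSeq (k + 1)) - 5 / ((k : ℝ) + 1) :=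
    monotone_nat_of_le_succ fun k => by
      simpa using log_glaisherSeq_sub_le_succ k.succ_ne_zero
  have h := hmono m.zero_le
  have : (0 : ℝ) ≤ 5 / ((m : ℝ) + 1) := by positivity
  rw [← exp_log (glaisherSeq_pos one_ne_zero), ← exp_log (glaisherSeq_pos hn), ← exp_add,
    exp_le_exp]
  simp only [CharP.cast_eq_zero, zero_add, div_one] at h
  linarith

theorem IsGlaisher.pos {A : ℝ} (hA : IsGlaisher A) : 0 < A := by
  have hlim : glaisherSeq 1 * exp (-5) ≤ exp (1 / 12) / A :=
    ge_of_tendsto (isGlaisher_iff.mp hA) <|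
      (eventually_ne_atTop 0).mono fun _ hn => glaisherSeq_one_mul_exp_le hn
  have := glaisherSeq_pos one_ne_zero
  exact (div_pos_iff_of_pos_left (exp_pos _)).mp (lt_of_lt_of_le (by positivity) hlim)

end Dimer

open Dimer Filter Finset Real in
/-- Proposition 7.1, eq. (7.3): `∏_{i=2}^d L(2i) ∼ C_e√d` as
`d → ∞`, with `C_e = 4/(πC)` and `C = 2^{1/6} e^{1/2} π / A⁶`. -/
theorem statement_16 (A : ℝ) (hA : IsGlaisher A) :
    Filter.Tendsto
      (fun d : ℕ => (∏ i ∈ Finset.Icc 2 d, Lker (2 * (i : ℝ))) / Real.sqrt d)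
      Filter.atTop
      (nhds (4 / (Real.pi * ((2 : ℝ) ^ ((1 : ℝ) / 6) * Real.exp (1 / 2) * Real.pi / A ^ 6)))) := by
  have hc := isGlaisher_iff.mp hA
  have hc0 : exp (1 / 12) / A ≠ 0 := div_ne_zero (exp_pos _).ne' hA.pos.ne'
  have hlim := (((hc.comp (tendsto_id.const_mul_atTop' two_pos)).pow 2).div (hc.pow 8)
    (pow_ne_zero 8 hc0)).const_mul (4 / (π ^ 2 * 2 ^ (1 / 6 : ℝ)))
  have hvalue :
      4 / (π ^ 2 * 2 ^ (1 / 6 : ℝ)) * ((exp (1 / 12) / A) ^ 2 / (exp (1 / 12) / A) ^ 8) =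
        4 / (π * (2 ^ (1 / 6 : ℝ) * exp (1 / 2) * π / A ^ 6)) := by
    have he : exp (1 / 12) ^ 6 = exp (1 / 2) := by rw [← exp_nat_mul]; norm_num
    field_simp
    rw [he, mul_comm]
  rw [← hvalue]
  exact hlim.congr' <|
    (eventually_ne_atTop 0).mono fun d hd => (prod_Lker_two_mul_div_sqrt hd).symm
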